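/- Corollary 1: fix a segment s₀ ∈ S and define the restricted achievable set A₀ := { G(x, fun k => Σ_{s∈S} p k s) | C : K → S → ℝ with C ≥ 0 componentwise and C k s₀ = 0 for all k ∈ K, W : K → S → ℝ with W ≥ 0 componentwise, and (x, p) optimal for DA(C,W) }. Then A₀ = A; in particular sInf A₀ = sInf A = S^BiD. That is, for multi-segment bidding curves, as long as one segment has zero bid price, the bilevel framework achieves the same expected system cost as the unrestricted Problem BiD. -/

import Mathlib

open Finset

/-- Feasibility for the priced day-ahead problem DA(C,W): the non-VRE decision `x`
together with the aggregate VRE dispatch lies in `Y`, and each segment dispatch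
lies between `0` and the bid quantity `W k s`. -/
def DAFeasible {n : ℕ} {K S : Type*} [Fintype S]
    (Y : Set ((Fin n → ℝ) × (K → ℝ)))
    (W : K → S → ℝ) (x : Fin n → ℝ) (p : K → S → ℝ) : Prop :=
  ((x, fun k => ∑ s, p k s) ∈ Y) ∧ ∀ k s, 0 ≤ p k s ∧ p k s ≤ W k s

/-- Optimality for the priced day-ahead problem DA(C,W): feasible and minimizing
`f0 x + Σ_k Σ_s C k s * p k s` over all feasible pairs. -/
def DAOptimal {n : ℕ} {K S : Type*} [Fintype K] [Fintype S]
    (Y : Set ((Fin n → ℝ) × (K → ℝ))) (f0 : (Fin n → ℝ) → ℝ)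
    (C W : K → S → ℝ) (x : Fin n → ℝ) (p : K → S → ℝ) : Prop :=
  DAFeasible Y W x p ∧
    ∀ x' p', DAFeasible Y W x' p' →
      f0 x + ∑ k, ∑ s, C k s * p k s ≤ f0 x' + ∑ k, ∑ s, C k s * p' k s

/-- Feasibility for the quantity-only day-ahead problem DA0(W'). -/
def DA0Feasible {n : ℕ} {K : Type*}
    (Y : Set ((Fin n → ℝ) × (K → ℝ)))
    (W' : K → ℝ) (x : Fin n → ℝ) (q : K → ℝ) : Prop :=
  ((x, q) ∈ Y) ∧ ∀ k, 0 ≤ q k ∧ q k ≤ W' k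

/-- Optimality for the quantity-only day-ahead problem DA0(W'): feasible and
minimizing `f0 x` over all feasible pairs. -/
def DA0Optimal {n : ℕ} {K : Type*}
    (Y : Set ((Fin n → ℝ) × (K → ℝ))) (f0 : (Fin n → ℝ) → ℝ)
    (W' : K → ℝ) (x : Fin n → ℝ) (q : K → ℝ) : Prop :=
  DA0Feasible Y W' x q ∧ ∀ x' q', DA0Feasible Y W' x' q' → f0 x ≤ f0 x'

/-! Given an optimal dispatch `(x, p)` of `DA(C, W)` with `C ≥ 0`, let `t k = ∑ s, p k s`.
Any pair `(x', q')` with `0 ≤ q' ≤ t` can be realised by scaling every segment of `p` by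
`q' k / t k`; this never raises the (nonnegative) bid cost, so optimality of `(x, p)` gives
`f0 x ≤ f0 x'`. Hence `(x, t)` solves `DA0(t)`, and a solution of `DA0(t)` is reproduced by
the zero-price bid that offers all of `t` on the single segment `s₀`. -/

theorem exists_nonneg_le_sum_eq {ι 𝕜 : Type*} [Fintype ι] [Field 𝕜] [LinearOrder 𝕜]
    [IsStrictOrderedRing 𝕜] {p : ι → 𝕜} (hp : 0 ≤ p) {a : 𝕜} (ha : 0 ≤ a)
    (hap : a ≤ ∑ i, p i) : ∃ r : ι → 𝕜, 0 ≤ r ∧ r ≤ p ∧ ∑ i, r i = a := by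
  have ht : 0 ≤ ∑ i, p i := Fintype.sum_nonneg hp
  refine ⟨fun i => a / (∑ j, p j) * p i, fun i => mul_nonneg (div_nonneg ha ht) (hp i),
    fun i => mul_le_of_le_one_left (hp i) (div_le_one_of_le₀ hap ht), ?_⟩
  rw [← mul_sum]
  rcases ht.eq_or_lt with ht0 | htpos
  · rw [← ht0, mul_zero]
    exact (le_antisymm (ht0 ▸ hap) ha).symm
  · exact div_mul_cancel₀ a htpos.ne'

section

variable {n : ℕ} {K S : Type*} [Fintype S] {Y : Set ((Fin n → ℝ) × (K → ℝ))}

theorem DAFeasible.bid_nonneg {W : K → S → ℝ} {x : Fin n → ℝ} {p : K → S → ℝ}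
    (h : DAFeasible Y W x p) (k : K) (s : S) : 0 ≤ W k s :=
  (h.2 k s).1.trans (h.2 k s).2

variable [Fintype K] {f0 : (Fin n → ℝ) → ℝ}

theorem DAOptimal.da0Optimal_sum {C W : K → S → ℝ} {x : Fin n → ℝ} {p : K → S → ℝ}
    (hC : ∀ k s, 0 ≤ C k s) (hopt : DAOptimal Y f0 C W x p) :
    DA0Optimal Y f0 (fun k => ∑ s, p k s) x (fun k => ∑ s, p k s) := by
  obtain ⟨⟨hY, hp⟩, hmin⟩ := hopt
  refine ⟨⟨hY, fun k => ⟨sum_nonneg fun s _ => (hp k s).1, le_rfl⟩⟩, ?_⟩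
  rintro x' q' ⟨hY', hq'⟩
  have hsplit : ∀ k, ∃ r : S → ℝ, 0 ≤ r ∧ r ≤ p k ∧ ∑ s, r s = q' k := fun k =>
    exists_nonneg_le_sum_eq (fun s => (hp k s).1) (hq' k).1 (hq' k).2
  choose r hr0 hrp hrq using hsplit
  have hq'_eq : (fun k => ∑ s, r k s) = q' := funext hrq
  have hfeas : DAFeasible Y W x' r :=
    ⟨hq'_eq ▸ hY', fun k s => ⟨hr0 k s, (hrp k s).trans (hp k s).2⟩⟩
  have hcost : ∑ k, ∑ s, C k s * r k s ≤ ∑ k, ∑ s, C k s * p k s :=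
    sum_le_sum fun k _ => sum_le_sum fun s _ => mul_le_mul_of_nonneg_left (hrp k s) (hC k s)
  linarith [hmin x' r hfeas]

theorem DA0Optimal.daOptimal_single [DecidableEq S] {W' : K → ℝ} {x : Fin n → ℝ}
    {q : K → ℝ} (s₀ : S) (hopt : DA0Optimal Y f0 W' x q) :
    DAOptimal Y f0 0 (fun k => Pi.single s₀ (W' k)) x (fun k => Pi.single s₀ (q k)) := by
  obtain ⟨⟨hY, hq⟩, hmin⟩ := hopt
  refine ⟨⟨by simpa using hY, fun k s =>
    ⟨(Pi.single_nonneg.2 (hq k).1 : (0 : S → ℝ) ≤ _) s, Pi.single_mono s₀ (hq k).2 s⟩⟩, ?_⟩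
  rintro x' p' ⟨hY', hp'⟩
  simp only [Pi.zero_apply, zero_mul, sum_const_zero, add_zero]
  refine hmin x' _ ⟨hY', fun k => ⟨sum_nonneg fun s _ => (hp' k s).1, ?_⟩⟩
  calc ∑ s, p' k s ≤ ∑ s, Pi.single s₀ (W' k) s := sum_le_sum fun s _ => (hp' k s).2
    _ = W' k := by simp

end

theorem zero_price_segment_suffices_general {n : ℕ} {K S : Type*}
    [Fintype K] [Fintype S] (s₀ : S)
    (Y : Set ((Fin n → ℝ) × (K → ℝ))) (f0 : (Fin n → ℝ) → ℝ)
    (G : (Fin n → ℝ) × (K → ℝ) → ℝ) :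
    ({v : ℝ | ∃ (C W : K → S → ℝ) (x : Fin n → ℝ) (p : K → S → ℝ),
        (∀ k s, 0 ≤ C k s) ∧ (∀ k, C k s₀ = 0) ∧ (∀ k s, 0 ≤ W k s) ∧
        DAOptimal Y f0 C W x p ∧ v = G (x, fun k => ∑ s, p k s)} =
      {v : ℝ | ∃ (C W : K → S → ℝ) (x : Fin n → ℝ) (p : K → S → ℝ),
        (∀ k s, 0 ≤ C k s) ∧ (∀ k s, 0 ≤ W k s) ∧ DAOptimal Y f0 C W x p ∧
        v = G (x, fun k => ∑ s, p k s)}) ∧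
    (sInf {v : ℝ | ∃ (C W : K → S → ℝ) (x : Fin n → ℝ) (p : K → S → ℝ),
        (∀ k s, 0 ≤ C k s) ∧ (∀ k, C k s₀ = 0) ∧ (∀ k s, 0 ≤ W k s) ∧
        DAOptimal Y f0 C W x p ∧ v = G (x, fun k => ∑ s, p k s)} =
      sInf {v : ℝ | ∃ (C W : K → S → ℝ) (x : Fin n → ℝ) (p : K → S → ℝ),
        (∀ k s, 0 ≤ C k s) ∧ (∀ k s, 0 ≤ W k s) ∧ DAOptimal Y f0 C W x p ∧
        v = G (x, fun k => ∑ s, p k s)}) := by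
  classical
  refine (fun h => ⟨h, congrArg sInf h⟩) (Set.ext fun v => ⟨?_, ?_⟩)
  · rintro ⟨C, W, x, p, hC, -, hW, hopt, rfl⟩
    exact ⟨C, W, x, p, hC, hW, hopt, rfl⟩
  · rintro ⟨C, W, x, p, hC, -, hopt, rfl⟩
    have hopt₀ := (hopt.da0Optimal_sum hC).daOptimal_single s₀
    exact ⟨0, _, x, _, fun _ _ => le_rfl, fun _ => rfl, hopt₀.1.bid_nonneg,
      hopt₀, by simp⟩

/-- Corollary 1: for multi-segment bidding curves, as long as one segment `s₀` has
zero bid price, the bilevel framework achieves exactly the same achievable-cost set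
(and hence the same expected system cost) as the unrestricted Problem BiD. -/
theorem zero_price_segment_suffices {n : ℕ} {K S : Type*}
    [Fintype K] [Fintype S] [Nonempty S] (s₀ : S)
    (Y : Set ((Fin n → ℝ) × (K → ℝ))) (f0 : (Fin n → ℝ) → ℝ)
    (G : (Fin n → ℝ) × (K → ℝ) → ℝ) :
    ({v : ℝ | ∃ (C W : K → S → ℝ) (x : Fin n → ℝ) (p : K → S → ℝ),
        (∀ k s, 0 ≤ C k s) ∧ (∀ k, C k s₀ = 0) ∧ (∀ k s, 0 ≤ W k s) ∧
        DAOptimal Y f0 C W x p ∧ v = G (x, fun k => ∑ s, p k s)} =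
      {v : ℝ | ∃ (C W : K → S → ℝ) (x : Fin n → ℝ) (p : K → S → ℝ),
        (∀ k s, 0 ≤ C k s) ∧ (∀ k s, 0 ≤ W k s) ∧ DAOptimal Y f0 C W x p ∧
        v = G (x, fun k => ∑ s, p k s)}) ∧
    (sInf {v : ℝ | ∃ (C W : K → S → ℝ) (x : Fin n → ℝ) (p : K → S → ℝ),
        (∀ k s, 0 ≤ C k s) ∧ (∀ k, C k s₀ = 0) ∧ (∀ k s, 0 ≤ W k s) ∧
        DAOptimal Y f0 C W x p ∧ v = G (x, fun k => ∑ s, p k s)} =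
      sInf {v : ℝ | ∃ (C W : K → S → ℝ) (x : Fin n → ℝ) (p : K → S → ℝ),
        (∀ k s, 0 ≤ C k s) ∧ (∀ k s, 0 ≤ W k s) ∧ DAOptimal Y f0 C W x p ∧
        v = G (x, fun k => ∑ s, p k s)}) :=
  zero_price_segment_suffices_general s₀ Y f0 G
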